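/- arXiv:1211.6643 — 11 statements merged into one kernel-verified Lean document; each statement's English description precedes it below -/
import Mathlib

section
/- Let L be a c×c real matrix with nonnegative off-diagonal entries negated (i.e., L = Δ - A where A has nonnegative entries and Δ is diagonal with column sums of A) such that both the column sums and row sums of L are zero (L is balanced: 𝟙ᵀL = 0 and L𝟙 = 0). Then for every vector γ ∈ ℝ^c, γᵀ L Exp(γ) ≥ 0, where Exp is the componentwise exponential. -/
open Matrix Finset

theorem laplacian_exp_nonneg (c : ℕ) (L : Matrix (Fin c) (Fin c) ℝ)
    (hoff : ∀ i j, i ≠ j → L i j ≤ 0)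
    (hcol : ∀ j, ∑ i, L i j = 0)
    (hrow : ∀ i, ∑ j, L i j = 0)
    (γ : Fin c → ℝ) :
    0 ≤ γ ⬝ᵥ L.mulVec (fun i => Real.exp (γ i)) := by
  set E : Fin c → ℝ := fun i => Real.exp (γ i) with hE
  have h1 : ∑ i, ∑ j, L i j * (γ j * E j) = 0 := by
    rw [Finset.sum_comm]
    have : ∀ j, ∑ i, L i j * (γ j * E j) = 0 := by
      intro j
      rw [← Finset.sum_mul, hcol j, zero_mul]
    simp [this]
  have h2 : ∑ i, ∑ j, L i j * E j = 0 := by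
    rw [Finset.sum_comm]
    have : ∀ j, ∑ i, L i j * E j = 0 := by
      intro j
      rw [← Finset.sum_mul, hcol j, zero_mul]
    simp [this]
  have h3 : ∑ i, ∑ j, L i j * E i = 0 := by
    have : ∀ i, ∑ j, L i j * E i = 0 := by
      intro i
      rw [← Finset.sum_mul, hrow i, zero_mul]
    simp [this]
  have key : γ ⬝ᵥ L.mulVec E
      = ∑ i, ∑ j, L i j * (γ i * E j - γ j * E j + E j - E i) := by
    simp only [dotProduct, mulVec]
    have expand : ∀ i, γ i * (∑ j, L i j * E j) = ∑ j, L i j * (γ i * E j) := by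
      intro i
      rw [Finset.mul_sum]
      congr 1; ext j; ring
    calc ∑ i, γ i * (∑ j, L i j * E j)
        = ∑ i, ∑ j, L i j * (γ i * E j) := by
          exact Finset.sum_congr rfl fun i _ => expand i
      _ = (∑ i, ∑ j, L i j * (γ i * E j)) - (∑ i, ∑ j, L i j * (γ j * E j))
            + (∑ i, ∑ j, L i j * E j) - (∑ i, ∑ j, L i j * E i) := by
          rw [h1, h2, h3]; ring
      _ = ∑ i, ∑ j, L i j * (γ i * E j - γ j * E j + E j - E i) := by
          rw [← Finset.sum_sub_distrib, ← Finset.sum_add_distrib, ← Finset.sum_sub_distrib]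
          refine Finset.sum_congr rfl fun i _ => ?_
          rw [← Finset.sum_sub_distrib, ← Finset.sum_add_distrib, ← Finset.sum_sub_distrib]
          refine Finset.sum_congr rfl fun j _ => ?_
          ring
  rw [key]
  refine Finset.sum_nonneg fun i _ => Finset.sum_nonneg fun j _ => ?_
  rcases eq_or_ne i j with h | h
  · subst h
    have : γ i * E i - γ i * E i + E i - E i = 0 := by ring
    rw [this, mul_zero]
  · have hL := hoff i j h
    have hT : γ i * E j - γ j * E j + E j - E i ≤ 0 := by
      have hlin := Real.add_one_le_exp (γ i - γ j)
      have hm : (γ i - γ j + 1) * Real.exp (γ j)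
          ≤ Real.exp (γ i - γ j) * Real.exp (γ j) :=
        mul_le_mul_of_nonneg_right hlin (Real.exp_pos _).le
      rw [← Real.exp_add, sub_add_cancel] at hm
      simp only [hE]
      nlinarith
    nlinarith [hL, hT]
end

section
/- Let L be a balanced weighted Laplacian matrix of a directed graph with incidence matrix B (edge (i→j) gives weight k_{ji} > 0). Then for γ ∈ ℝ^c, γᵀ L Exp(γ) = 0 if and only if Bᵀγ = 0, i.e., γ_i = γ_j for every edge (i,j) of the graph. -/
open Matrix Finset

theorem laplacian_exp_eq_zero_iff (c r : ℕ) (L : Matrix (Fin c) (Fin c) ℝ)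
    (src tgt : Fin r → Fin c) (B : Matrix (Fin c) (Fin r) ℝ)
    (hB : ∀ i e, B i e = (if i = tgt e then (1 : ℝ) else 0) - (if i = src e then 1 else 0))
    (hst : ∀ e, src e ≠ tgt e)
    (hoff : ∀ i j, i ≠ j → L i j ≤ 0)
    (hedge : ∀ i j, i ≠ j → (L j i < 0 ↔ ∃ e, src e = i ∧ tgt e = j))
    (hcol : ∀ j, ∑ i, L i j = 0)
    (hrow : ∀ i, ∑ j, L i j = 0)
    (γ : Fin c → ℝ) :
    γ ⬝ᵥ L.mulVec (fun i => Real.exp (γ i)) = 0 ↔ Bᵀ.mulVec γ = 0 := by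
  set T : Fin c → Fin c → ℝ := fun i j =>
    (-L i j) * ((γ j - γ i) * Real.exp (γ j) - (Real.exp (γ j) - Real.exp (γ i))) with hT
  -- value of Bᵀγ on each edge
  have hBt : ∀ e, Bᵀ.mulVec γ e = γ (tgt e) - γ (src e) := by
    intro e
    simp [Matrix.mulVec, dotProduct, hB, sub_mul, Finset.sum_sub_distrib, ite_mul]
  -- bracket nonnegativity
  have hbra : ∀ x y : ℝ, 0 ≤ (y - x) * Real.exp y - (Real.exp y - Real.exp x) := by
    intro x y
    have h := mul_le_mul_of_nonneg_right (Real.add_one_le_exp (x - y)) (Real.exp_pos y).le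
    rw [← Real.exp_add, sub_add_cancel] at h
    nlinarith [h]
  have hbra' : ∀ x y : ℝ,
      (y - x) * Real.exp y - (Real.exp y - Real.exp x) = 0 → x = y := by
    intro x y h
    by_contra hne
    have hlt := mul_lt_mul_of_pos_right (Real.add_one_lt_exp (sub_ne_zero.mpr hne)) (Real.exp_pos y)
    rw [← Real.exp_add, sub_add_cancel] at hlt
    nlinarith [hlt]
  have hTnn : ∀ i j, 0 ≤ T i j := by
    intro i j
    rcases eq_or_ne i j with rfl | hij
    · simp [hT]
    · exact mul_nonneg (neg_nonneg.mpr (hoff i j hij)) (hbra _ _)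
  -- the key identity
  have key : (∑ i, ∑ j, T i j) = γ ⬝ᵥ L.mulVec (fun i => Real.exp (γ i)) := by
    have hL2 : ∑ i, ∑ j, L i j * Real.exp (γ i) = 0 := by
      apply Finset.sum_eq_zero; intro i _
      rw [← Finset.sum_mul, hrow, zero_mul]
    have hL1 : ∑ i, ∑ j, L i j * ((1 - γ j) * Real.exp (γ j)) = 0 := by
      rw [Finset.sum_comm]
      apply Finset.sum_eq_zero; intro j _
      rw [← Finset.sum_mul, hcol, zero_mul]
    have expand : ∀ i j : Fin c, T i j =
        γ i * (L i j * Real.exp (γ j)) + L i j * ((1 - γ j) * Real.exp (γ j))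
          - L i j * Real.exp (γ i) := by
      intro i j; simp only [hT]; ring
    calc ∑ i, ∑ j, T i j
        = ∑ i, ∑ j, (γ i * (L i j * Real.exp (γ j)) + L i j * ((1 - γ j) * Real.exp (γ j))
            - L i j * Real.exp (γ i)) := by simp only [expand]
      _ = (∑ i, ∑ j, γ i * (L i j * Real.exp (γ j)))
            + (∑ i, ∑ j, L i j * ((1 - γ j) * Real.exp (γ j)))
            - ∑ i, ∑ j, L i j * Real.exp (γ i) := by
          simp [Finset.sum_add_distrib, Finset.sum_sub_distrib]
      _ = γ ⬝ᵥ L.mulVec (fun i => Real.exp (γ i)) := by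
          rw [hL1, hL2]
          simp [dotProduct, Matrix.mulVec, Finset.mul_sum]
  constructor
  · intro hS
    have hsum0 : ∑ i, ∑ j, T i j = 0 := key.trans hS
    have hz : ∀ i j, T i j = 0 := by
      intro i j
      have h1 : ∀ i ∈ Finset.univ (α := Fin c), (0:ℝ) ≤ ∑ j, T i j :=
        fun i _ => Finset.sum_nonneg fun j _ => hTnn i j
      have h2 := (Finset.sum_eq_zero_iff_of_nonneg h1).mp hsum0 i (Finset.mem_univ i)
      exact (Finset.sum_eq_zero_iff_of_nonneg fun j _ => hTnn i j).mp h2 j (Finset.mem_univ j)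
    funext e
    rw [Pi.zero_apply, hBt, sub_eq_zero]
    have hij : src e ≠ tgt e := hst e
    have hL : L (tgt e) (src e) < 0 := (hedge (src e) (tgt e) hij).mpr ⟨e, rfl, rfl⟩
    have hzz := hz (tgt e) (src e)
    have hb0 : (γ (src e) - γ (tgt e)) * Real.exp (γ (src e))
        - (Real.exp (γ (src e)) - Real.exp (γ (tgt e))) = 0 := by
      rcases mul_eq_zero.mp hzz with h | h
      · exfalso; linarith
      · exact h
    exact hbra' (γ (tgt e)) (γ (src e)) hb0
  · intro h0
    have he : ∀ e, γ (tgt e) = γ (src e) := by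
      intro e
      have := congrFun h0 e
      rw [hBt, Pi.zero_apply] at this
      linarith
    rw [← key]
    apply Finset.sum_eq_zero; intro i _
    apply Finset.sum_eq_zero; intro j _
    rcases eq_or_ne i j with rfl | hij
    · simp [hT]
    · rcases lt_or_eq_of_le (hoff i j hij) with hlt | heq
      · obtain ⟨e, hs, ht⟩ := (hedge j i hij.symm).mp hlt
        have : γ i = γ j := by rw [← ht, ← hs, he e]
        simp [hT, this]
      · simp [hT, heq]
end

section
/- Let L ∈ ℝ^{c×c} be a balanced weighted Laplacian (zero row and column sums, nonpositive off-diagonal entries, positive diagonal entries) partitioned into blocks L = [[L11, L12],[L21, L22]] with L11 of size ĉ×ĉ, and suppose L22 is invertible. Then the Schur complement L̂ = L11 - L12 L22^{-1} L21 satisfies 𝟙_ĉᵀ L̂ = 0 and L̂ 𝟙_ĉ = 0. -/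
open Matrix Finset

theorem schur_complement_balanced (ch d : ℕ)
    (L11 : Matrix (Fin ch) (Fin ch) ℝ) (L12 : Matrix (Fin ch) (Fin d) ℝ)
    (L21 : Matrix (Fin d) (Fin ch) ℝ) (L22 : Matrix (Fin d) (Fin d) ℝ)
    (hoff : ∀ i j, i ≠ j → Matrix.fromBlocks L11 L12 L21 L22 i j ≤ 0)
    (hdiag : ∀ i, 0 < Matrix.fromBlocks L11 L12 L21 L22 i i)
    (hcol : ∀ j, ∑ i, Matrix.fromBlocks L11 L12 L21 L22 i j = 0)
    (hrow : ∀ i, ∑ j, Matrix.fromBlocks L11 L12 L21 L22 i j = 0)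
    (hinv : IsUnit L22.det) :
    (∀ j, ∑ i, (L11 - L12 * L22⁻¹ * L21) i j = 0) ∧
      (∀ i, ∑ j, (L11 - L12 * L22⁻¹ * L21) i j = 0) := by
  have hLi : L22⁻¹ * L22 = 1 := Matrix.nonsing_inv_mul L22 hinv
  have hLi' : L22 * L22⁻¹ = 1 := Matrix.mul_nonsing_inv L22 hinv
  set u : Fin ch → ℝ := fun _ => 1 with hu
  set w : Fin d → ℝ := fun _ => 1 with hw
  -- row sums
  have h1 : L11 *ᵥ u + L12 *ᵥ w = 0 := by
    funext i
    have := hrow (Sum.inl i)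
    simpa [Fintype.sum_sum_type, Matrix.mulVec, dotProduct, hu, hw] using this
  have h2 : L21 *ᵥ u + L22 *ᵥ w = 0 := by
    funext i
    have := hrow (Sum.inr i)
    simpa [Fintype.sum_sum_type, Matrix.mulVec, dotProduct, hu, hw] using this
  -- column sums
  have h3 : u ᵥ* L11 + w ᵥ* L21 = 0 := by
    funext j
    have := hcol (Sum.inl j)
    simpa [Fintype.sum_sum_type, Matrix.vecMul, dotProduct, hu, hw] using this
  have h4 : u ᵥ* L12 + w ᵥ* L22 = 0 := by
    funext j
    have := hcol (Sum.inr j)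
    simpa [Fintype.sum_sum_type, Matrix.vecMul, dotProduct, hu, hw] using this
  have hrowkey : (L11 - L12 * L22⁻¹ * L21) *ᵥ u = 0 := by
    have h2' : L21 *ᵥ u = -(L22 *ᵥ w) := eq_neg_of_add_eq_zero_left h2
    have : (L12 * L22⁻¹ * L21) *ᵥ u = -(L12 *ᵥ w) := by
      rw [← Matrix.mulVec_mulVec, h2', Matrix.mulVec_neg, Matrix.mulVec_mulVec,
        Matrix.mul_assoc, hLi, Matrix.mul_one]
    rw [Matrix.sub_mulVec, this, sub_neg_eq_add, h1]
  have hcolkey : u ᵥ* (L11 - L12 * L22⁻¹ * L21) = 0 := by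
    have h4' : u ᵥ* L12 = -(w ᵥ* L22) := eq_neg_of_add_eq_zero_left h4
    have : u ᵥ* (L12 * L22⁻¹ * L21) = -(w ᵥ* L21) := by
      rw [← Matrix.vecMul_vecMul, ← Matrix.vecMul_vecMul, h4', Matrix.neg_vecMul,
        Matrix.vecMul_vecMul, hLi', Matrix.vecMul_one, Matrix.neg_vecMul]
    rw [Matrix.vecMul_sub, this, sub_neg_eq_add, h3]
  constructor
  · intro j
    have := congrFun hcolkey j
    simpa [Matrix.vecMul, dotProduct, hu] using this
  · intro i
    have := congrFun hrowkey i
    simpa [Matrix.mulVec, dotProduct, hu] using this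
end

section
/- Let U be a linear subspace of ℝ^m and x*, x₀ ∈ ℝ^m_+ strictly positive vectors. Then there exists a unique μ ∈ U^⊥ such that x*·Exp(μ) - x₀ ∈ U, where x*·Exp(μ) denotes the componentwise product of x* with the componentwise exponential of μ. -/
open Matrix Filter RealInnerProductSpace

private lemma term_lb {a b : ℝ} (ha : 0 < a) (hb : 0 < b) (t : ℝ) :
    b * |t| - 4 * b ^ 2 / a ≤ a * Real.exp t - b * t := by
  have hd : 0 < 4 * b ^ 2 / a := by positivity
  rcases le_or_gt t 0 with ht | ht
  · rw [abs_of_nonpos ht]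
    nlinarith [Real.exp_pos t, mul_pos ha (Real.exp_pos t)]
  · rw [abs_of_pos ht]
    have h1 : t / 2 + 1 ≤ Real.exp (t / 2) := Real.add_one_le_exp _
    have h2 : Real.exp (t/2) * Real.exp (t/2) = Real.exp t := by
      rw [← Real.exp_add]; ring_nf
    have h3 : t * t ≤ 4 * Real.exp t := by nlinarith [Real.exp_pos (t/2)]
    have hc : (4 * b ^ 2 / a) * a = 4 * b ^ 2 := by field_simp
    have h4 : a^2 * (t*t) ≤ a^2 * (4 * Real.exp t) :=
      mul_le_mul_of_nonneg_left h3 (sq_nonneg a)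
    nlinarith [sq_nonneg (a * t - 4 * b), mul_pos ha ht]


theorem feinberg_existence_uniqueness (m : ℕ) (U : Submodule ℝ (Fin m → ℝ))
    (xs x0 : Fin m → ℝ) (hxs : ∀ i, 0 < xs i) (hx0 : ∀ i, 0 < x0 i) :
    ∃! μ : Fin m → ℝ,
      (∀ u ∈ U, μ ⬝ᵥ u = 0) ∧ (fun i => xs i * Real.exp (μ i)) - x0 ∈ U := by
  have key : ∀ μ ν : Fin m → ℝ,
      ((∀ u ∈ U, μ ⬝ᵥ u = 0) ∧ (fun i => xs i * Real.exp (μ i)) - x0 ∈ U) →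
      ((∀ u ∈ U, ν ⬝ᵥ u = 0) ∧ (fun i => xs i * Real.exp (ν i)) - x0 ∈ U) → μ = ν := by
    intro μ ν h1 h2
    obtain ⟨hμ1, hμ2⟩ := h1
    obtain ⟨hν1, hν2⟩ := h2
    have hg : ((fun i => xs i * Real.exp (μ i)) - x0) - ((fun i => xs i * Real.exp (ν i)) - x0) ∈ U :=
      sub_mem hμ2 hν2
    have h0 : (μ - ν) ⬝ᵥ (((fun i => xs i * Real.exp (μ i)) - x0) - ((fun i => xs i * Real.exp (ν i)) - x0)) = 0 := by
      rw [sub_dotProduct, hμ1 _ hg, hν1 _ hg, sub_zero]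
    have hsum : ∑ i, (μ i - ν i) * (xs i * (Real.exp (μ i) - Real.exp (ν i))) = 0 := by
      rw [← h0]
      simp only [dotProduct, Pi.sub_apply]
      exact Finset.sum_congr rfl fun i _ => by ring
    have hnn : ∀ i ∈ Finset.univ, 0 ≤ (μ i - ν i) * (xs i * (Real.exp (μ i) - Real.exp (ν i))) := by
      intro i _
      have hx := hxs i
      rcases lt_trichotomy (μ i) (ν i) with h | h | h
      · have he := Real.exp_lt_exp.mpr h
        nlinarith [mul_pos hx (mul_pos (sub_pos.mpr h) (sub_pos.mpr he))]
      · simp [h]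
      · have he := Real.exp_lt_exp.mpr h
        nlinarith [mul_pos hx (mul_pos (sub_pos.mpr h) (sub_pos.mpr he))]
    funext i
    have hz := (Finset.sum_eq_zero_iff_of_nonneg hnn).mp hsum i (Finset.mem_univ i)
    by_contra hne
    rcases lt_or_gt_of_ne hne with h | h
    · have he := Real.exp_lt_exp.mpr h
      nlinarith [mul_pos (hxs i) (mul_pos (sub_pos.mpr h) (sub_pos.mpr he))]
    · have he := Real.exp_lt_exp.mpr h
      nlinarith [mul_pos (hxs i) (mul_pos (sub_pos.mpr h) (sub_pos.mpr he))]

  have hex : ∃ μ : Fin m → ℝ,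
      (∀ u ∈ U, μ ⬝ᵥ u = 0) ∧ (fun i => xs i * Real.exp (μ i)) - x0 ∈ U := by
    rcases Nat.eq_zero_or_pos m with hm | hm
    · subst hm
      refine ⟨0, fun u _ => by simp [dotProduct], ?_⟩
      have : ((fun i => xs i * Real.exp ((0 : Fin 0 → ℝ) i)) - x0) = 0 := Subsingleton.elim _ _
      rw [this]
      exact U.zero_mem
    · haveI : Nonempty (Fin m) := ⟨⟨0, hm⟩⟩
      set e : EuclideanSpace ℝ (Fin m) ≃ₗ[ℝ] (Fin m → ℝ) :=
        WithLp.linearEquiv 2 ℝ (Fin m → ℝ) with he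
      set U' : Submodule ℝ (EuclideanSpace ℝ (Fin m)) := U.comap e.toLinearMap with hU'
      have hmemU' : ∀ x : EuclideanSpace ℝ (Fin m), x ∈ U' ↔ e x ∈ U := fun x => Iff.rfl
      have hip : ∀ x y : EuclideanSpace ℝ (Fin m), ⟪x, y⟫ = (e x) ⬝ᵥ (e y) := by
        intro x y
        simp only [PiLp.inner_apply, RCLike.inner_apply, dotProduct, starRingEnd_apply, star_trivial]
        exact Finset.sum_congr rfl fun i _ => mul_comm _ _
      -- objective function
      set f : EuclideanSpace ℝ (Fin m) → ℝ :=
        fun μ => ∑ i, (xs i * Real.exp (μ i) - x0 i * μ i) with hf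
      have hfc : Continuous f := by
        apply continuous_finset_sum
        intro i _
        have hc : Continuous (fun μ : EuclideanSpace ℝ (Fin m) => μ i) :=
          (continuous_apply i).comp (PiLp.continuous_ofLp 2 (fun _ : Fin m => ℝ))
        exact ((continuous_const.mul (Real.continuous_exp.comp hc)).sub (continuous_const.mul hc))
      -- lower bound constants
      set B : ℝ := ∑ i, 4 * (x0 i) ^ 2 / xs i with hB
      set c : ℝ := Finset.univ.inf' Finset.univ_nonempty x0 with hc
      have hcpos : 0 < c := by
        rw [hc, Finset.lt_inf'_iff]
        exact fun i _ => hx0 i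
      have hcle : ∀ i, c ≤ x0 i := fun i => Finset.inf'_le _ (Finset.mem_univ i)
      have hlb : ∀ μ : EuclideanSpace ℝ (Fin m), c * ‖μ‖ - B ≤ f μ := by
        intro μ
        have h1 : ∑ i, (x0 i * |μ i| - 4 * (x0 i) ^ 2 / xs i) ≤ f μ :=
          Finset.sum_le_sum fun i _ => term_lb (hxs i) (hx0 i) (μ i)
        rw [Finset.sum_sub_distrib] at h1
        have h2 : c * ∑ i, |μ i| ≤ ∑ i, x0 i * |μ i| := by
          rw [Finset.mul_sum]
          exact Finset.sum_le_sum fun i _ => mul_le_mul_of_nonneg_right (hcle i) (abs_nonneg _)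
        have h3 : ‖μ‖ ≤ ∑ i, |μ i| := by
          rw [EuclideanSpace.norm_eq]
          have : ∑ i, ‖μ i‖ ^ 2 ≤ (∑ i, |μ i|) ^ 2 := by
            simp only [Real.norm_eq_abs]
            exact Finset.sum_sq_le_sq_sum_of_nonneg fun i _ => abs_nonneg _
          calc Real.sqrt (∑ i, ‖μ i‖ ^ 2) ≤ Real.sqrt ((∑ i, |μ i|) ^ 2) := Real.sqrt_le_sqrt this
            _ = ∑ i, |μ i| := Real.sqrt_sq (Finset.sum_nonneg fun i _ => abs_nonneg _)
        have := mul_le_mul_of_nonneg_left h3 hcpos.le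
        linarith
      -- minimize over the orthogonal complement
      set S := U'ᗮ with hS
      set F : S → ℝ := fun w => f w.val with hF
      have hFc : Continuous F := hfc.comp continuous_subtype_val
      obtain ⟨w, hw⟩ : ∃ w : S, ∀ y : S, F w ≤ F y := by
        apply hFc.exists_forall_le' 0
        have htend : Tendsto (fun w : S => ‖w‖) (cocompact S) atTop :=
          tendsto_norm_cocompact_atTop
        filter_upwards [htend.eventually_ge_atTop ((F 0 + B) / c)] with y hy
        have h1 : c * ‖y‖ - B ≤ F y := by
          have := hlb y.val
          simpa [hF] using this
        have h2 : c * ((F 0 + B) / c) ≤ c * ‖y‖ := mul_le_mul_of_nonneg_left hy hcpos.le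
        rw [mul_div_cancel₀ _ hcpos.ne'] at h2
        linarith
      -- first-order condition
      have hgrad : ∀ v ∈ U'ᗮ, ∑ i, (xs i * Real.exp (w.val i) - x0 i) * v i = 0 := by
        intro v hv
        set φ : ℝ → ℝ := fun t => f (w.val + t • v) with hφ
        have hmin : IsLocalMin φ 0 := by
          apply Filter.Eventually.of_forall
          intro t
          have hmem : w.val + t • v ∈ S := add_mem w.2 (S.smul_mem t hv)
          have h1 : φ t = F ⟨w.val + t • v, hmem⟩ := rfl
          have h2 : φ 0 = F w := by simp [hφ, hF]
          rw [h1, h2]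
          exact hw _
        have hder : HasDerivAt φ (∑ i, (xs i * Real.exp (w.val i) - x0 i) * v i) 0 := by
          have hφ' : φ = fun t => ∑ i, (xs i * Real.exp (w.val i + t * v i) - x0 i * (w.val i + t * v i)) := by
            funext t
            rfl
          rw [hφ']
          apply HasDerivAt.fun_sum
          intro i _
          have h1 : HasDerivAt (fun t : ℝ => w.val i + t * v i) (v i) 0 := by
            simpa using ((hasDerivAt_id (0:ℝ)).mul_const (v i)).const_add (w.val i)
          have h2 := ((h1.exp.const_mul (xs i)).sub (h1.const_mul (x0 i)))
          convert h2 using 1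
          · rfl
          simp
          ring
        have := hmin.hasDerivAt_eq_zero hder
        exact this
      -- the gradient vector lies in U'ᗮᗮ = U'
      set g : EuclideanSpace ℝ (Fin m) :=
        (WithLp.equiv 2 (Fin m → ℝ)).symm (fun i => xs i * Real.exp (w.val i) - x0 i) with hg
      have hgU : g ∈ U' := by
        have hmem : g ∈ U'ᗮᗮ := by
          rw [Submodule.mem_orthogonal]
          intro u hu
          rw [hip]
          have := hgrad u hu
          rw [← this]
          simp only [dotProduct]
          exact Finset.sum_congr rfl fun i _ => mul_comm _ _
        rwa [Submodule.orthogonal_orthogonal] at hmem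
      refine ⟨e w.val, ?_, ?_⟩
      · intro u hu
        have huS : e.symm u ∈ U' := by rw [hmemU']; simpa using hu
        have := Submodule.inner_right_of_mem_orthogonal huS w.2
        rw [hip] at this
        simp only [LinearEquiv.apply_symm_apply] at this
        rw [← this]
        exact (dotProduct_comm _ _)
      · have : (fun i => xs i * Real.exp ((e w.val) i)) - x0 = e g := by
          funext i
          rfl
        rw [this]
        exact hgU
  obtain ⟨μ, hμ⟩ := hex
  exact ⟨μ, hμ, fun ν hν => key ν μ hν hμ⟩
end

section
/- Consider the dynamics ẋ = -Z L(x*) Exp(Zᵀ Ln(x/x*)) on ℝ^m_+, where Z ∈ ℝ^{m×c} has nonnegative entries, L(x*) ∈ ℝ^{c×c} is a balanced weighted Laplacian (𝟙ᵀL(x*) = 0 and L(x*)𝟙 = 0, nonpositive off-diagonal entries), and x* ∈ ℝ^m_+. If x** ∈ ℝ^m_+ satisfies Z L(x*) Exp(Zᵀ Ln(x**/x*)) = 0, then Bᵀ Zᵀ Ln(x**/x*) = 0, i.e., Sᵀ Ln(x**/x*) = 0 where S = ZB. -/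
open Matrix Finset

theorem equilibrium_implies_stoich_log_relation (m c r : ℕ)
    (Z : Matrix (Fin m) (Fin c) ℝ) (L : Matrix (Fin c) (Fin c) ℝ)
    (src tgt : Fin r → Fin c) (B : Matrix (Fin c) (Fin r) ℝ)
    (hB : ∀ i e, B i e = (if i = tgt e then (1 : ℝ) else 0) - (if i = src e then 1 else 0))
    (hZ : ∀ i j, 0 ≤ Z i j)
    (hoff : ∀ i j, i ≠ j → L i j ≤ 0)
    (hedge : ∀ i j, i ≠ j → (L j i < 0 ↔ ∃ e, src e = i ∧ tgt e = j))
    (hcol : ∀ j, ∑ i, L i j = 0)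
    (hrow : ∀ i, ∑ j, L i j = 0)
    (xs xss : Fin m → ℝ) (hxs : ∀ i, 0 < xs i) (hxss : ∀ i, 0 < xss i)
    (hequil : Z.mulVec (L.mulVec (fun j =>
      Real.exp (Zᵀ.mulVec (fun i => Real.log (xss i / xs i)) j))) = 0) :
    Bᵀ.mulVec (Zᵀ.mulVec (fun i => Real.log (xss i / xs i))) = 0 := by
  set ℓ : Fin m → ℝ := fun i => Real.log (xss i / xs i) with hℓ
  set γ : Fin c → ℝ := Zᵀ.mulVec ℓ with hγ
  set v : Fin c → ℝ := fun j => Real.exp (γ j) with hv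
  have hvpos : ∀ j, 0 < v j := fun j => Real.exp_pos _
  -- the quadratic form vanishes
  have key : γ ⬝ᵥ L.mulVec v = 0 := by
    calc γ ⬝ᵥ L.mulVec v = (ℓ ᵥ* Z) ⬝ᵥ L.mulVec v := by rw [hγ, mulVec_transpose]
    _ = ℓ ⬝ᵥ Z.mulVec (L.mulVec v) := by rw [dotProduct_mulVec ℓ Z (L.mulVec v)]
    _ = 0 := by rw [hequil]; simp [dotProduct]
  -- the decomposed sum vanishes
  have hsum0 : ∑ j, ∑ k, L j k * (v k * (γ j - γ k) - (v j - v k)) = 0 := by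
    have hre : ∀ j : Fin c, ∀ k : Fin c,
        L j k * (v k * (γ j - γ k) - (v j - v k))
        = γ j * (L j k * v k) - (L j k) * (v k * γ k) - (L j k) * v j + (L j k) * v k := by
      intro j k; ring
    have hA : ∑ j, ∑ k, γ j * (L j k * v k) = γ ⬝ᵥ L.mulVec v := by
      simp [dotProduct, mulVec, Finset.mul_sum]
    have hBt : ∑ j : Fin c, ∑ k : Fin c, L j k * (v k * γ k) = 0 := by
      rw [Finset.sum_comm]
      refine Finset.sum_eq_zero fun k _ => ?_
      rw [← Finset.sum_mul, hcol, zero_mul]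
    have hC : ∑ j : Fin c, ∑ k : Fin c, L j k * v j = 0 := by
      refine Finset.sum_eq_zero fun j _ => ?_
      rw [← Finset.sum_mul, hrow, zero_mul]
    have hD : ∑ j : Fin c, ∑ k : Fin c, L j k * v k = 0 := by
      rw [Finset.sum_comm]
      refine Finset.sum_eq_zero fun k _ => ?_
      rw [← Finset.sum_mul, hcol, zero_mul]
    calc ∑ j, ∑ k, L j k * (v k * (γ j - γ k) - (v j - v k))
        = ∑ j, ∑ k, (γ j * (L j k * v k) - (L j k) * (v k * γ k) - (L j k) * v j + (L j k) * v k) := by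
          exact Finset.sum_congr rfl fun j _ => Finset.sum_congr rfl fun k _ => hre j k
      _ = (∑ j, ∑ k, γ j * (L j k * v k)) - (∑ j, ∑ k, L j k * (v k * γ k))
          - (∑ j, ∑ k, L j k * v j) + (∑ j, ∑ k, L j k * v k) := by
          simp [Finset.sum_add_distrib, Finset.sum_sub_distrib]
      _ = 0 := by rw [hA, hBt, hC, hD, key]; ring
  -- each summand is nonnegative
  have hnn : ∀ j k : Fin c, 0 ≤ L j k * (v k * (γ j - γ k) - (v j - v k)) := by
    intro j k
    rcases eq_or_ne j k with h | h
    · subst h; simp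
    · have h1 : L j k ≤ 0 := hoff j k h
      have h2 : v k * (γ j - γ k) - (v j - v k) ≤ 0 := by
        have := Real.add_one_le_exp (γ j - γ k)
        have h3 : v k * (γ j - γ k + 1) ≤ v k * Real.exp (γ j - γ k) :=
          mul_le_mul_of_nonneg_left this (hvpos k).le
        have h4 : v k * Real.exp (γ j - γ k) = v j := by
          rw [hv]; simp [← Real.exp_add]
        nlinarith [hvpos k]
      nlinarith [mul_nonneg (neg_nonneg.mpr h1) (neg_nonneg.mpr h2)]
  -- hence each summand vanishes
  have hzero : ∀ j k : Fin c, L j k * (v k * (γ j - γ k) - (v j - v k)) = 0 := by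
    have houter : ∀ j ∈ Finset.univ,
        (0:ℝ) ≤ ∑ k, L j k * (v k * (γ j - γ k) - (v j - v k)) :=
      fun j _ => Finset.sum_nonneg fun k _ => hnn j k
    have h1 := (Finset.sum_eq_zero_iff_of_nonneg houter).mp hsum0
    intro j k
    have h2 := (Finset.sum_eq_zero_iff_of_nonneg (fun k _ => hnn j k)).mp
      (h1 j (Finset.mem_univ j)) k (Finset.mem_univ k)
    exact h2
  -- γ equal along each edge
  have hedgeeq : ∀ e : Fin r, γ (tgt e) = γ (src e) := by
    intro e
    rcases eq_or_ne (src e) (tgt e) with h | h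
    · rw [h]
    · have hL : L (tgt e) (src e) < 0 := (hedge _ _ h).mpr ⟨e, rfl, rfl⟩
      have hz := hzero (tgt e) (src e)
      have hbr : v (src e) * (γ (tgt e) - γ (src e)) - (v (tgt e) - v (src e)) = 0 := by
        rcases mul_eq_zero.mp hz with h' | h'
        · exact absurd h' hL.ne
        · exact h'
      by_contra hne
      have hd : γ (tgt e) - γ (src e) ≠ 0 := sub_ne_zero.mpr hne
      have := Real.add_one_lt_exp hd
      have h3 : v (src e) * (γ (tgt e) - γ (src e) + 1)
          < v (src e) * Real.exp (γ (tgt e) - γ (src e)) :=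
        (mul_lt_mul_iff_right₀ (hvpos _)).mpr this
      have h4 : v (src e) * Real.exp (γ (tgt e) - γ (src e)) = v (tgt e) := by
        rw [hv]; simp [← Real.exp_add]
      nlinarith [hvpos (src e)]
  -- conclude
  funext e
  have : Bᵀ.mulVec γ e = γ (tgt e) - γ (src e) := by
    simp only [mulVec, dotProduct, transpose_apply]
    simp [hB, sub_mul, Finset.sum_sub_distrib]
  show (Bᵀ.mulVec γ) e = (0 : Fin r → ℝ) e
  simp only [Pi.zero_apply]
  rw [this, hedgeeq e, sub_self]
end

section
/- Consider the dynamics ẋ = -Z L(x*) Exp(Zᵀ Ln(x/x*)) as above with L(x*) a balanced weighted Laplacian whose underlying graph has incidence matrix B, and suppose L(x*)𝟙 = 0. If x** ∈ ℝ^m_+ satisfies Bᵀ Zᵀ Ln(x**/x*) = 0, then Z L(x*) Exp(Zᵀ Ln(x**/x*)) = 0, i.e., x** is an equilibrium of the dynamics. -/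
open Matrix Finset

theorem stoich_log_relation_implies_equilibrium (m c r : ℕ)
    (Z : Matrix (Fin m) (Fin c) ℝ) (L : Matrix (Fin c) (Fin c) ℝ)
    (src tgt : Fin r → Fin c) (B : Matrix (Fin c) (Fin r) ℝ)
    (hB : ∀ i e, B i e = (if i = tgt e then (1 : ℝ) else 0) - (if i = src e then 1 else 0))
    (hZ : ∀ i j, 0 ≤ Z i j)
    (hsupp : ∀ i j, i ≠ j → L j i ≠ 0 → ∃ e, src e = i ∧ tgt e = j)
    (hcol : ∀ j, ∑ i, L i j = 0)
    (hrow : ∀ i, ∑ j, L i j = 0)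
    (xs xss : Fin m → ℝ) (hxs : ∀ i, 0 < xs i) (hxss : ∀ i, 0 < xss i)
    (hker : Bᵀ.mulVec (Zᵀ.mulVec (fun i => Real.log (xss i / xs i))) = 0) :
    Z.mulVec (L.mulVec (fun j =>
      Real.exp (Zᵀ.mulVec (fun i => Real.log (xss i / xs i)) j))) = 0 := by
  set μ := Zᵀ.mulVec (fun i => Real.log (xss i / xs i)) with hμ
  have hedge : ∀ e, μ (tgt e) = μ (src e) := by
    intro e
    have h := congrFun hker e
    simp only [Matrix.mulVec, dotProduct, Matrix.transpose_apply, hB, sub_mul,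
      Finset.sum_sub_distrib, ite_mul, one_mul, zero_mul, Finset.sum_ite_eq, Finset.sum_ite_eq',
      Finset.mem_univ, if_true, Pi.zero_apply] at h
    linarith
  have hL : L.mulVec (fun j => Real.exp (μ j)) = 0 := by
    funext i
    have key : ∀ j, L i j * Real.exp (μ j) = L i j * Real.exp (μ i) := by
      intro j
      by_cases hij : j = i
      · subst hij; rfl
      · by_cases h0 : L i j = 0
        · simp [h0]
        · obtain ⟨e, hs, ht⟩ := hsupp j i hij h0
          rw [← hs, ← ht, hedge e]
    simp only [Matrix.mulVec, dotProduct, Pi.zero_apply]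
    rw [Finset.sum_congr rfl (fun j _ => key j), ← Finset.sum_mul, hrow i, zero_mul]
  rw [hL, Matrix.mulVec_zero]
end

section
/- Every equilibrium of a complex-balanced mass action network is itself a complex-equilibrium: if x* ∈ ℝ^m_+ satisfies L(x*)𝟙 = 0 and x** ∈ ℝ^m_+ satisfies Z L(x*) Exp(Zᵀ Ln(x**/x*)) = 0, then L(x*) Exp(Zᵀ Ln(x**/x*)) = 0. -/
open Matrix Finset

theorem equilibrium_is_complex_equilibrium (m c : ℕ)
    (Z : Matrix (Fin m) (Fin c) ℝ) (L : Matrix (Fin c) (Fin c) ℝ)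
    (hZ : ∀ i j, 0 ≤ Z i j)
    (hoff : ∀ i j, i ≠ j → L i j ≤ 0)
    (hcol : ∀ j, ∑ i, L i j = 0)
    (hrow : ∀ i, ∑ j, L i j = 0)
    (xs xss : Fin m → ℝ) (hxs : ∀ i, 0 < xs i) (hxss : ∀ i, 0 < xss i)
    (hequil : Z.mulVec (L.mulVec (fun j =>
      Real.exp (Zᵀ.mulVec (fun i => Real.log (xss i / xs i)) j))) = 0) :
    L.mulVec (fun j =>
      Real.exp (Zᵀ.mulVec (fun i => Real.log (xss i / xs i)) j)) = 0 := by
  set μ : Fin m → ℝ := fun i => Real.log (xss i / xs i) with hμ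
  set a : Fin c → ℝ := Zᵀ.mulVec μ with ha
  set w : Fin c → ℝ := fun j => Real.exp (a j) with hw
  -- key: a ⬝ᵥ (L w) = 0
  have hLw : ∀ i, (L.mulVec w) i = ∑ j, L i j * Real.exp (a j) := by
    intro i; simp [Matrix.mulVec, dotProduct, hw]
  have key : ∑ i, ∑ j, L i j * Real.exp (a j) * a i = 0 := by
    have h0 : a ⬝ᵥ (L.mulVec w) = 0 := by
      rw [ha, Matrix.mulVec_transpose, ← Matrix.dotProduct_mulVec, hequil]
      simp [dotProduct]
    calc ∑ i, ∑ j, L i j * Real.exp (a j) * a i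
        = ∑ i, a i * (L.mulVec w) i := by
          refine Finset.sum_congr rfl fun i _ => ?_
          rw [hLw i, Finset.mul_sum]
          exact Finset.sum_congr rfl fun j _ => by ring
      _ = a ⬝ᵥ (L.mulVec w) := by simp [dotProduct]
      _ = 0 := h0
  -- the termwise quantity
  set T : Fin c → Fin c → ℝ := fun i j =>
    L i j * (Real.exp (a i) - Real.exp (a j) - Real.exp (a j) * (a i - a j)) with hT
  have hS1 : ∑ i, ∑ j, L i j * Real.exp (a i) = 0 := by
    refine Finset.sum_eq_zero fun i _ => ?_
    rw [← Finset.sum_mul, hrow i, zero_mul]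
  have hS2 : ∑ i, ∑ j, L i j * Real.exp (a j) = 0 := by
    rw [Finset.sum_comm]
    refine Finset.sum_eq_zero fun j _ => ?_
    rw [← Finset.sum_mul, hcol j, zero_mul]
  have hS3 : ∑ i, ∑ j, L i j * (Real.exp (a j) * a j) = 0 := by
    rw [Finset.sum_comm]
    refine Finset.sum_eq_zero fun j _ => ?_
    rw [← Finset.sum_mul, hcol j, zero_mul]
  have hsumT : ∑ i, ∑ j, T i j = 0 := by
    have expand : ∀ i j, T i j = L i j * Real.exp (a i) - L i j * Real.exp (a j)
        - L i j * Real.exp (a j) * a i + L i j * (Real.exp (a j) * a j) := by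
      intro i j; rw [hT]; ring
    calc ∑ i, ∑ j, T i j
        = ∑ i, ∑ j, (L i j * Real.exp (a i) - L i j * Real.exp (a j)
            - L i j * Real.exp (a j) * a i + L i j * (Real.exp (a j) * a j)) := by
          exact Finset.sum_congr rfl fun i _ => Finset.sum_congr rfl fun j _ => expand i j
      _ = 0 := by
          simp only [Finset.sum_add_distrib, Finset.sum_sub_distrib]
          rw [hS1, hS2, hS3, key]; ring
  have hTnonpos : ∀ i j, T i j ≤ 0 := by
    intro i j
    rcases eq_or_ne i j with rfl | hne
    · simp [hT]
    · have hb : 0 ≤ Real.exp (a i) - Real.exp (a j) - Real.exp (a j) * (a i - a j) := by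
        have h1 : (a i - a j) + 1 ≤ Real.exp (a i - a j) := Real.add_one_le_exp _
        have h2 : ((a i - a j) + 1) * Real.exp (a j) ≤ Real.exp (a i - a j) * Real.exp (a j) :=
          mul_le_mul_of_nonneg_right h1 (Real.exp_nonneg _)
        rw [← Real.exp_add, sub_add_cancel] at h2
        nlinarith [Real.exp_pos (a j)]
      exact mul_nonpos_of_nonpos_of_nonneg (hoff i j hne) hb
  -- each T i j = 0
  have hTzero : ∀ i j, T i j = 0 := by
    have hrowT : ∀ i ∈ Finset.univ, ∑ j, T i j ≤ 0 := fun i _ =>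
      Finset.sum_nonpos (fun j _ => hTnonpos i j)
    have h2 : ∀ i ∈ (Finset.univ : Finset (Fin c)), ∑ j, T i j = 0 :=
      (Finset.sum_eq_zero_iff_of_nonpos hrowT).1 hsumT
    intro i j
    exact (Finset.sum_eq_zero_iff_of_nonpos (fun j _ => hTnonpos i j)).1
      (h2 i (Finset.mem_univ i)) j (Finset.mem_univ j)
  -- conclude
  funext i
  have hceq : ∀ j, L i j * Real.exp (a j) = L i j * Real.exp (a i) := by
    intro j
    rcases eq_or_ne (L i j) 0 with h0 | h0
    · rw [h0]; ring
    · rcases eq_or_ne i j with rfl | hne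
      · rfl
      · have hbr : Real.exp (a i) - Real.exp (a j) - Real.exp (a j) * (a i - a j) = 0 := by
          have := hTzero i j
          rw [hT] at this
          exact (mul_eq_zero.1 this).resolve_left h0
        have haij : a i = a j := by
          by_contra hne2
          have h1 : (a i - a j) + 1 < Real.exp (a i - a j) :=
            Real.add_one_lt_exp (sub_ne_zero_of_ne hne2)
          have h2 : ((a i - a j) + 1) * Real.exp (a j) < Real.exp (a i - a j) * Real.exp (a j) :=
            mul_lt_mul_of_pos_right h1 (Real.exp_pos _)
          rw [← Real.exp_add, sub_add_cancel] at h2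
          nlinarith [Real.exp_pos (a j)]
        rw [haij]
  show (L.mulVec w) i = 0
  rw [hLw i]
  calc ∑ j, L i j * Real.exp (a j) = ∑ j, L i j * Real.exp (a i) :=
        Finset.sum_congr rfl fun j _ => hceq j
    _ = (∑ j, L i j) * Real.exp (a i) := (Finset.sum_mul _ _ _).symm
    _ = 0 := by rw [hrow i, zero_mul]
end

section
/- Uniqueness of the balanced Laplacian on a connected graph of complexes: let x* and x** both be complex-equilibria of a complex-balanced network whose graph of complexes is connected (ker Bᵀ = span 𝟙). Then Zᵀ Ln(x**) = Zᵀ Ln(x*) + c𝟙 for some constant c, and consequently L(x**) = d·L(x*) for some positive constant d = exp(c). -/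
open Matrix Finset

theorem laplacian_unique_up_to_constant (m c r : ℕ)
    (Z : Matrix (Fin m) (Fin c) ℝ) (B : Matrix (Fin c) (Fin r) ℝ)
    (L : Matrix (Fin c) (Fin c) ℝ)
    (hconn : ∀ γ : Fin c → ℝ, Bᵀ.mulVec γ = 0 ↔ ∃ a : ℝ, γ = fun _ => a)
    (xs xss : Fin m → ℝ) (hxs : ∀ i, 0 < xs i) (hxss : ∀ i, 0 < xss i)
    (heq : (Z * B)ᵀ.mulVec (fun i => Real.log (xss i)) =
           (Z * B)ᵀ.mulVec (fun i => Real.log (xs i))) :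
    ∃ a : ℝ,
      (Zᵀ.mulVec (fun i => Real.log (xss i)) =
        fun j => Zᵀ.mulVec (fun i => Real.log (xs i)) j + a) ∧
      L * Matrix.diagonal (fun j => Real.exp (Zᵀ.mulVec (fun i => Real.log (xss i)) j)) =
        Real.exp a •
          (L * Matrix.diagonal (fun j => Real.exp (Zᵀ.mulVec (fun i => Real.log (xs i)) j))) := by
  set u : Fin c → ℝ := Zᵀ.mulVec (fun i => Real.log (xss i)) with hu
  set v : Fin c → ℝ := Zᵀ.mulVec (fun i => Real.log (xs i)) with hv
  have hker : Bᵀ.mulVec (u - v) = 0 := by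
    have h1 : (Z * B)ᵀ.mulVec (fun i => Real.log (xss i)) = Bᵀ.mulVec u := by
      rw [Matrix.transpose_mul, ← Matrix.mulVec_mulVec, hu]
    have h2 : (Z * B)ᵀ.mulVec (fun i => Real.log (xs i)) = Bᵀ.mulVec v := by
      rw [Matrix.transpose_mul, ← Matrix.mulVec_mulVec, hv]
    rw [Matrix.mulVec_sub, ← h1, ← h2, heq, sub_self]
  obtain ⟨a, ha⟩ := (hconn (u - v)).mp hker
  have hua : u = fun j => v j + a := by
    funext j
    have := congrFun ha j
    simp only [Pi.sub_apply] at this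
    linarith
  refine ⟨a, hua, ?_⟩
  have hdiag : (Matrix.diagonal (fun j => Real.exp (u j))) =
      Real.exp a • Matrix.diagonal (fun j => Real.exp (v j)) := by
    rw [hua]
    ext j k
    by_cases h : j = k
    · subst h; simp [Matrix.diagonal, Real.exp_add, mul_comm]
    · simp [Matrix.diagonal, h]
  rw [hdiag, Matrix.mul_smul]
end

section
/- With notation as above, Ġ(x) = 0 if and only if Bᵀ Zᵀ Ln(x/x*) = 0 (equivalently Sᵀ Ln(x/x*) = 0 with S = ZB), i.e., the set where the Lyapunov function derivative vanishes equals the equilibrium set E = { x ∈ ℝ^m_+ : Sᵀ Ln x = Sᵀ Ln x* }. -/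
open Matrix Finset

lemma conv_nonneg' (a b : ℝ) :
    0 ≤ Real.exp a - Real.exp b - (a - b) * Real.exp b := by
  have h := Real.add_one_le_exp (a - b)
  have hb := Real.exp_pos b
  have he : Real.exp (a - b) * Real.exp b = Real.exp a := by
    rw [← Real.exp_add]; ring_nf
  nlinarith [mul_le_mul_of_nonneg_right h hb.le]

lemma conv_pos' (a b : ℝ) (hab : a ≠ b) :
    0 < Real.exp a - Real.exp b - (a - b) * Real.exp b := by
  have h := Real.add_one_lt_exp (sub_ne_zero.mpr hab)
  have hb := Real.exp_pos b
  have he : Real.exp (a - b) * Real.exp b = Real.exp a := by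
    rw [← Real.exp_add]; ring_nf
  nlinarith [mul_lt_mul_of_pos_right h hb]

lemma lap_sum (c : ℕ) (L : Matrix (Fin c) (Fin c) ℝ)
    (hcol : ∀ j, ∑ i, L i j = 0) (hrow : ∀ i, ∑ j, L i j = 0)
    (γ : Fin c → ℝ) :
    γ ⬝ᵥ L.mulVec (fun j => Real.exp (γ j)) =
      ∑ i, ∑ j, (-L i j) *
        (Real.exp (γ i) - Real.exp (γ j) - (γ i - γ j) * Real.exp (γ j)) := by
  have h1 : ∑ i, ∑ j, L i j * Real.exp (γ i) = 0 := by
    refine Finset.sum_eq_zero fun i _ => ?_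
    rw [← Finset.sum_mul, hrow i, zero_mul]
  have h2 : ∑ i, ∑ j, L i j * Real.exp (γ j) = 0 := by
    rw [Finset.sum_comm]
    refine Finset.sum_eq_zero fun j _ => ?_
    rw [← Finset.sum_mul, hcol j, zero_mul]
  have h3 : ∑ i, ∑ j, L i j * (γ j * Real.exp (γ j)) = 0 := by
    rw [Finset.sum_comm]
    refine Finset.sum_eq_zero fun j _ => ?_
    rw [← Finset.sum_mul, hcol j, zero_mul]
  have key : ∀ i j : Fin c, (-L i j) *
      (Real.exp (γ i) - Real.exp (γ j) - (γ i - γ j) * Real.exp (γ j)) =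
      γ i * (L i j * Real.exp (γ j)) - L i j * Real.exp (γ i)
        + L i j * Real.exp (γ j) - L i j * (γ j * Real.exp (γ j)) := by
    intro i j; ring
  simp only [key, Finset.sum_sub_distrib, Finset.sum_add_distrib, h1, h2, h3]
  simp [dotProduct, mulVec, Finset.mul_sum]

lemma lap_zero_iff (c : ℕ) (L : Matrix (Fin c) (Fin c) ℝ)
    (hoff : ∀ i j, i ≠ j → L i j ≤ 0)
    (hcol : ∀ j, ∑ i, L i j = 0) (hrow : ∀ i, ∑ j, L i j = 0)
    (γ : Fin c → ℝ) :
    γ ⬝ᵥ L.mulVec (fun j => Real.exp (γ j)) = 0 ↔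
      ∀ i j, L i j < 0 → γ i = γ j := by
  set t : Fin c → Fin c → ℝ := fun i j => (-L i j) *
    (Real.exp (γ i) - Real.exp (γ j) - (γ i - γ j) * Real.exp (γ j)) with ht
  have hnn : ∀ i j, 0 ≤ t i j := by
    intro i j
    rcases eq_or_ne i j with h | h
    · subst h; simp [ht]
    · exact mul_nonneg (by linarith [hoff i j h]) (conv_nonneg' _ _)
  rw [lap_sum c L hcol hrow γ]
  have hiff : (∑ i, ∑ j, t i j) = 0 ↔ ∀ i j, t i j = 0 := by
    rw [Finset.sum_eq_zero_iff_of_nonneg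
      (fun i _ => Finset.sum_nonneg fun j _ => hnn i j)]
    constructor
    · intro h i j
      have := h i (Finset.mem_univ i)
      rw [Finset.sum_eq_zero_iff_of_nonneg (fun j _ => hnn i j)] at this
      exact this j (Finset.mem_univ j)
    · intro h i _
      exact Finset.sum_eq_zero fun j _ => h i j
  rw [hiff]
  constructor
  · intro h i j hL
    by_contra hne
    have h1 : 0 < -L i j := by linarith
    have h2 := conv_pos' (γ i) (γ j) hne
    have h3 : -L i j * (Real.exp (γ i) - Real.exp (γ j) - (γ i - γ j) * Real.exp (γ j)) = 0 :=
      h i j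
    nlinarith
  · intro h i j
    rcases eq_or_ne i j with rfl | hne
    · simp [ht]
    · rcases lt_or_eq_of_le (hoff i j hne) with hL | hL
      · have := h i j hL
        simp [ht, this]
      · simp [ht, hL]

theorem lyapunov_derivative_zero_iff (m c r : ℕ)
    (Z : Matrix (Fin m) (Fin c) ℝ) (L : Matrix (Fin c) (Fin c) ℝ)
    (src tgt : Fin r → Fin c) (B : Matrix (Fin c) (Fin r) ℝ)
    (hB : ∀ i e, B i e = (if i = tgt e then (1 : ℝ) else 0) - (if i = src e then 1 else 0))
    (hst : ∀ e, src e ≠ tgt e)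
    (hZ : ∀ i j, 0 ≤ Z i j)
    (hoff : ∀ i j, i ≠ j → L i j ≤ 0)
    (hedge : ∀ i j, i ≠ j → (L j i < 0 ↔ ∃ e, src e = i ∧ tgt e = j))
    (hcol : ∀ j, ∑ i, L i j = 0)
    (hrow : ∀ i, ∑ j, L i j = 0)
    (xs : Fin m → ℝ) (hxs : ∀ i, 0 < xs i)
    (x : Fin m → ℝ) (hx : ∀ i, 0 < x i) :
    (Zᵀ.mulVec (fun i => Real.log (x i / xs i))) ⬝ᵥ
        L.mulVec (fun j => Real.exp (Zᵀ.mulVec (fun i => Real.log (x i / xs i)) j)) = 0 ↔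
      Bᵀ.mulVec (Zᵀ.mulVec (fun i => Real.log (x i / xs i))) = 0 := by
  set γ : Fin c → ℝ := Zᵀ.mulVec (fun i => Real.log (x i / xs i)) with hγ
  rw [lap_zero_iff c L hoff hcol hrow γ]
  have hBv : ∀ e, Bᵀ.mulVec γ e = γ (tgt e) - γ (src e) := by
    intro e
    simp only [mulVec, dotProduct, transpose_apply, hB, sub_mul, ite_mul, one_mul, zero_mul,
      Finset.sum_sub_distrib, Finset.sum_ite_eq', Finset.mem_univ, if_true]
  constructor
  · intro h
    funext e
    rw [hBv e, Pi.zero_apply, sub_eq_zero]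
    have hL : L (tgt e) (src e) < 0 :=
      (hedge (src e) (tgt e) (hst e)).mpr ⟨e, rfl, rfl⟩
    exact h _ _ hL
  · intro h i j hL
    have hne : i ≠ j := by
      rintro rfl
      have : (0:ℝ) ≤ L i i := by
        have := hrow i
        have hsum : ∑ k ∈ Finset.univ.erase i, L i k ≤ 0 :=
          Finset.sum_nonpos fun k hk =>
            hoff i k (Ne.symm (Finset.ne_of_mem_erase hk))
        have : L i i + ∑ k ∈ Finset.univ.erase i, L i k = 0 := by
          rw [← Finset.add_sum_erase _ _ (Finset.mem_univ i)] at this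
          exact this
        linarith
      linarith
    obtain ⟨e, hs, htg⟩ := (hedge j i hne.symm).mp hL
    have := congrFun h e
    rw [hBv e, Pi.zero_apply, sub_eq_zero] at this
    rw [← hs, ← htg] at *
    exact this
end

section
/- The equilibrium set of the reduced network contains that of the full network: let Z = [Z₁ Z₂] be the partition of the complex-stoichiometric matrix, L(x*) the balanced Laplacian with invertible block L22(x*), L̂(x*) the Schur complement, Ẑ = Z₁, and suppose the graph of complexes is connected (ker Bᵀ = span 𝟙_c). If x** ∈ ℝ^m_+ satisfies Bᵀ Zᵀ Ln(x**/x*) = 0, then L̂(x*) Exp(Ẑᵀ Ln(x**/x*)) = 0, so x** is an equilibrium of the reduced dynamics ẋ = -Ẑ L̂(x*) Exp(Ẑᵀ Ln(x/x*)). -/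
open Matrix Finset

theorem reduced_network_equilibria_superset (m ch d r : ℕ)
    (Z : Matrix (Fin m) (Fin ch ⊕ Fin d) ℝ)
    (L11 : Matrix (Fin ch) (Fin ch) ℝ) (L12 : Matrix (Fin ch) (Fin d) ℝ)
    (L21 : Matrix (Fin d) (Fin ch) ℝ) (L22 : Matrix (Fin d) (Fin d) ℝ)
    (B : Matrix (Fin ch ⊕ Fin d) (Fin r) ℝ)
    (hZ : ∀ i j, 0 ≤ Z i j)
    (hoff : ∀ i j, i ≠ j → Matrix.fromBlocks L11 L12 L21 L22 i j ≤ 0)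
    (hcol : ∀ j, ∑ i, Matrix.fromBlocks L11 L12 L21 L22 i j = 0)
    (hrow : ∀ i, ∑ j, Matrix.fromBlocks L11 L12 L21 L22 i j = 0)
    (hinv : IsUnit L22.det)
    (hconn : ∀ γ : Fin ch ⊕ Fin d → ℝ, Bᵀ.mulVec γ = 0 ↔ ∃ a : ℝ, γ = fun _ => a)
    (xs xss : Fin m → ℝ) (hxs : ∀ i, 0 < xs i) (hxss : ∀ i, 0 < xss i)
    (hequil : Bᵀ.mulVec (Zᵀ.mulVec (fun i => Real.log (xss i / xs i))) = 0) :
    (L11 - L12 * L22⁻¹ * L21).mulVec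
      (fun a => Real.exp (Zᵀ.mulVec (fun i => Real.log (xss i / xs i)) (Sum.inl a))) = 0 := by
  obtain ⟨a, ha⟩ := (hconn _).mp hequil
  have hv : (fun a' : Fin ch =>
      Real.exp (Zᵀ.mulVec (fun i => Real.log (xss i / xs i)) (Sum.inl a')))
      = fun _ => Real.exp a := by
    funext a'; rw [ha]
  rw [hv]
  have hone : (fun _ : Fin ch => Real.exp a) = Real.exp a • (fun _ => (1:ℝ)) := by
    funext _; simp
  rw [hone, Matrix.mulVec_smul]
  have h1 : ∀ b, L11.mulVec (fun _ => 1) b + L12.mulVec (fun _ => 1) b = 0 := by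
    intro b
    simpa [Matrix.mulVec, dotProduct, Fintype.sum_sum_type] using hrow (Sum.inl b)
  have h2 : L21.mulVec (fun _ => 1) = - L22.mulVec (fun _ => 1) := by
    funext b
    have h := hrow (Sum.inr b)
    simp only [Matrix.mulVec, dotProduct, Fintype.sum_sum_type, Matrix.fromBlocks_apply₂₁,
      Matrix.fromBlocks_apply₂₂, mul_one, Pi.neg_apply] at h ⊢
    linarith
  have hinvL : L22⁻¹.mulVec (L21.mulVec (fun _ => 1)) = - (fun _ => (1:ℝ)) := by
    rw [h2, Matrix.mulVec_neg, Matrix.mulVec_mulVec, Matrix.nonsing_inv_mul L22 hinv,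
      Matrix.one_mulVec]
  have key : (L11 - L12 * L22⁻¹ * L21).mulVec (fun _ => (1:ℝ)) = 0 := by
    rw [Matrix.sub_mulVec]
    have : (L12 * L22⁻¹ * L21).mulVec (fun _ => (1:ℝ))
        = L12.mulVec (L22⁻¹.mulVec (L21.mulVec (fun _ => 1))) := by
      rw [Matrix.mulVec_mulVec, Matrix.mulVec_mulVec, Matrix.mul_assoc]
    rw [this, hinvL, Matrix.mulVec_neg, sub_neg_eq_add]
    funext b
    simpa using h1 b
  rw [key, smul_zero]
end

section
/- All diagonal elements of the Schur complement of a balanced weighted Laplacian are nonnegative and the off-diagonal elements are nonpositive: if L ∈ ℝ^{c×c} is a balanced weighted Laplacian partitioned as [[L11,L12],[L21,L22]] with L22 invertible, then the Schur complement L̂ = L11 - L12 L22^{-1} L21 has L̂_{ii} ≥ 0 and L̂_{ij} ≤ 0 for i ≠ j. -/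
open Matrix Finset

lemma vecMul_nonneg_of_dominant {n : ℕ} (B : Matrix (Fin n) (Fin n) ℝ)
    (hoff : ∀ i j, i ≠ j → B i j ≤ 0)
    (hcol : ∀ j, 0 < ∑ i, B i j)
    (y : Fin n → ℝ) (hb : ∀ k, 0 ≤ (y ᵥ* B) k) : ∀ k, 0 ≤ y k := by
  by_contra h
  push_neg at h
  obtain ⟨k, hk⟩ := h
  obtain ⟨k0, -, hk0⟩ := Finset.exists_min_image univ y ⟨k, mem_univ k⟩
  have hm : y k0 < 0 := lt_of_le_of_lt (hk0 k (mem_univ k)) hk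
  have hlt : (y ᵥ* B) k0 < 0 := by
    have hle : ∀ l ∈ (univ : Finset (Fin n)), y l * B l k0 ≤ y k0 * B l k0 := by
      intro l _
      rcases eq_or_ne l k0 with rfl | hl
      · exact le_refl _
      · exact mul_le_mul_of_nonpos_right (hk0 l (mem_univ l)) (hoff l k0 hl)
    calc (y ᵥ* B) k0 = ∑ l, y l * B l k0 := by simp [Matrix.vecMul, dotProduct]
      _ ≤ ∑ l, y k0 * B l k0 := Finset.sum_le_sum hle
      _ = y k0 * ∑ l, B l k0 := by rw [Finset.mul_sum]
      _ < 0 := mul_neg_of_neg_of_pos hm (hcol k0)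
  exact absurd (hb k0) (not_le.mpr hlt)

lemma det_isUnit_of_dominant {n : ℕ} (B : Matrix (Fin n) (Fin n) ℝ)
    (hoff : ∀ i j, i ≠ j → B i j ≤ 0)
    (hcol : ∀ j, 0 < ∑ i, B i j) : IsUnit B.det := by
  rw [isUnit_iff_ne_zero]
  intro hdet
  have hT : Bᵀ.det = 0 := by rw [Matrix.det_transpose]; exact hdet
  obtain ⟨v, hv, hv0⟩ := (Matrix.exists_mulVec_eq_zero_iff).2 hT
  have heq : v ᵥ* B = 0 := by rw [← Matrix.mulVec_transpose]; exact hv0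
  have h1 : ∀ k, 0 ≤ v k :=
    vecMul_nonneg_of_dominant B hoff hcol v (by simp [heq])
  have h2 : ∀ k, 0 ≤ -v k := by
    refine vecMul_nonneg_of_dominant B hoff hcol (-v) ?_
    simp [Matrix.neg_vecMul, heq]
  exact hv (funext fun k => by simp only [Pi.zero_apply]; linarith [h1 k, h2 k])

lemma inv_nonneg_of_dominant {n : ℕ} (B : Matrix (Fin n) (Fin n) ℝ)
    (hoff : ∀ i j, i ≠ j → B i j ≤ 0)
    (hcol : ∀ j, 0 < ∑ i, B i j) : ∀ i j, 0 ≤ B⁻¹ i j := by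
  intro i j
  have hu := det_isUnit_of_dominant B hoff hcol
  have h1 : B⁻¹ * B = 1 := Matrix.nonsing_inv_mul B hu
  refine vecMul_nonneg_of_dominant B hoff hcol (fun k => B⁻¹ i k) ?_ j
  intro k
  have : ((fun k => B⁻¹ i k) ᵥ* B) k = (B⁻¹ * B) i k := by
    simp [Matrix.vecMul, dotProduct, Matrix.mul_apply]
  rw [this, h1, Matrix.one_apply]
  split <;> norm_num

lemma inv_nonneg_of_weak_dominant {n : ℕ} (B : Matrix (Fin n) (Fin n) ℝ)
    (hoff : ∀ i j, i ≠ j → B i j ≤ 0)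
    (hcol : ∀ j, 0 ≤ ∑ i, B i j)
    (hdet : IsUnit B.det) : ∀ i j, 0 ≤ B⁻¹ i j := by
  intro i j
  set g : ℝ → Matrix (Fin n) (Fin n) ℝ := fun ε => B + ε • 1 with hg
  set f : ℝ → ℝ := fun ε => ((g ε).det)⁻¹ * (g ε).adjugate i j with hf
  have hgc : Continuous g := by
    apply continuous_pi; intro a; apply continuous_pi; intro b
    simp only [hg, Matrix.add_apply, Matrix.smul_apply, smul_eq_mul]
    exact continuous_const.add (continuous_id.mul continuous_const)
  have hg0 : g 0 = B := by simp [hg]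
  have hdet0 : (g 0).det ≠ 0 := by rw [hg0]; exact hdet.ne_zero
  have hcont : ContinuousAt f 0 := by
    have h1 : ContinuousAt (fun ε => (g ε).det) 0 := (hgc.matrix_det).continuousAt
    have h2 : ContinuousAt (fun ε => (g ε).adjugate i j) 0 := by
      have := (hgc.matrix_adjugate).continuousAt (x := (0:ℝ))
      exact ((continuous_apply_apply i j).continuousAt.comp this)
    exact (h1.inv₀ hdet0).mul h2
  have hformula : ∀ A : Matrix (Fin n) (Fin n) ℝ, A⁻¹ i j = (A.det)⁻¹ * A.adjugate i j := by
    intro A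
    rw [Matrix.inv_def, Matrix.smul_apply, smul_eq_mul, Ring.inverse_eq_inv]
  have hpos : ∀ ε ∈ Set.Ioi (0:ℝ), 0 ≤ f ε := by
    intro ε hε
    have hoff' : ∀ a b, a ≠ b → (g ε) a b ≤ 0 := by
      intro a b hab
      simpa [hg, Matrix.one_apply, hab] using hoff a b hab
    have hcol' : ∀ b, 0 < ∑ a, (g ε) a b := by
      intro b
      have : ∑ a, (g ε) a b = (∑ a, B a b) + ε := by
        simp [hg, Finset.sum_add_distrib, Matrix.one_apply, Finset.sum_ite_eq']
      rw [this]
      have := hcol b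
      have := Set.mem_Ioi.mp hε
      linarith
    have := inv_nonneg_of_dominant (g ε) hoff' hcol' i j
    rwa [hformula (g ε)] at this
  have htend : Filter.Tendsto f (nhdsWithin 0 (Set.Ioi 0)) (nhds (f 0)) :=
    hcont.continuousWithinAt
  have h0 : (0:ℝ) ≤ f 0 :=
    ge_of_tendsto htend (Filter.eventually_of_mem self_mem_nhdsWithin hpos)
  rw [hformula B, ← hg0]
  exact h0

theorem schur_complement_sign_pattern (ch d : ℕ)
    (L11 : Matrix (Fin ch) (Fin ch) ℝ) (L12 : Matrix (Fin ch) (Fin d) ℝ)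
    (L21 : Matrix (Fin d) (Fin ch) ℝ) (L22 : Matrix (Fin d) (Fin d) ℝ)
    (hoff : ∀ i j, i ≠ j → Matrix.fromBlocks L11 L12 L21 L22 i j ≤ 0)
    (hdiag : ∀ i, 0 < Matrix.fromBlocks L11 L12 L21 L22 i i)
    (hcol : ∀ j, ∑ i, Matrix.fromBlocks L11 L12 L21 L22 i j = 0)
    (hrow : ∀ i, ∑ j, Matrix.fromBlocks L11 L12 L21 L22 i j = 0)
    (hinv : IsUnit L22.det) :
    (∀ i, 0 ≤ (L11 - L12 * L22⁻¹ * L21) i i) ∧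
      (∀ i j, i ≠ j → (L11 - L12 * L22⁻¹ * L21) i j ≤ 0) := by
  have h11 : ∀ i j : Fin ch, i ≠ j → L11 i j ≤ 0 := fun i j h => by
    simpa using hoff (Sum.inl i) (Sum.inl j) (by simp [h])
  have h12 : ∀ (i : Fin ch) (k : Fin d), L12 i k ≤ 0 := fun i k => by
    simpa using hoff (Sum.inl i) (Sum.inr k) (by simp)
  have h21 : ∀ (l : Fin d) (j : Fin ch), L21 l j ≤ 0 := fun l j => by
    simpa using hoff (Sum.inr l) (Sum.inl j) (by simp)
  have h22off : ∀ k l : Fin d, k ≠ l → L22 k l ≤ 0 := fun k l h => by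
    simpa using hoff (Sum.inr k) (Sum.inr l) (by simp [h])
  have hcol2 : ∀ l : Fin d, ∑ a, L12 a l + ∑ b, L22 b l = 0 := by
    intro l; simpa [Fintype.sum_sum_type] using hcol (Sum.inr l)
  have h22col : ∀ l : Fin d, 0 ≤ ∑ b, L22 b l := by
    intro l
    have hnp : ∑ a, L12 a l ≤ 0 := Finset.sum_nonpos fun a _ => h12 a l
    linarith [hcol2 l]
  have hInn : ∀ k l, 0 ≤ L22⁻¹ k l := inv_nonneg_of_weak_dominant L22 h22off h22col hinv
  -- the product L12 * L22⁻¹ * L21 is entrywise nonnegative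
  have hprod : ∀ (i j : Fin ch), 0 ≤ (L12 * L22⁻¹ * L21) i j := by
    intro i j
    rw [Matrix.mul_apply]
    refine Finset.sum_nonneg fun l _ => ?_
    have ha : (L12 * L22⁻¹) i l ≤ 0 := by
      rw [Matrix.mul_apply]
      exact Finset.sum_nonpos fun k _ => mul_nonpos_iff.mpr (Or.inr ⟨h12 i k, hInn k l⟩)
    have hb := h21 l j
    nlinarith
  have hoffS : ∀ i j : Fin ch, i ≠ j → (L11 - L12 * L22⁻¹ * L21) i j ≤ 0 := by
    intro i j hij
    have := hprod i j
    have := h11 i j hij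
    simp only [Matrix.sub_apply]
    linarith
  refine ⟨?_, hoffS⟩
  -- row sums
  have hrow1 : ∀ i : Fin ch, ∑ j, L11 i j + ∑ k, L12 i k = 0 := by
    intro i; simpa [Fintype.sum_sum_type] using hrow (Sum.inl i)
  have hrow2 : ∀ l : Fin d, ∑ j, L21 l j + ∑ k, L22 l k = 0 := by
    intro l; simpa [Fintype.sum_sum_type] using hrow (Sum.inr l)
  have hML : L12 * L22⁻¹ * L22 = L12 := by
    rw [Matrix.mul_assoc, Matrix.nonsing_inv_mul L22 hinv, Matrix.mul_one]
  have hrowS : ∀ i : Fin ch, ∑ j, (L11 - L12 * L22⁻¹ * L21) i j = 0 := by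
    intro i
    have h1 : ∑ j, (L12 * L22⁻¹ * L21) i j = - ∑ k, L12 i k := by
      calc ∑ j, (L12 * L22⁻¹ * L21) i j
          = ∑ j, ∑ l, (L12 * L22⁻¹) i l * L21 l j := by
            simp [Matrix.mul_apply]
        _ = ∑ l, (L12 * L22⁻¹) i l * ∑ j, L21 l j := by
            rw [Finset.sum_comm]
            exact Finset.sum_congr rfl fun l _ => (Finset.mul_sum _ _ _).symm
        _ = ∑ l, (L12 * L22⁻¹) i l * (-(∑ k, L22 l k)) := by
            refine Finset.sum_congr rfl fun l _ => ?_
            have : ∑ j, L21 l j = -(∑ k, L22 l k) := by linarith [hrow2 l]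
            rw [this]
        _ = - ∑ l, ∑ k, (L12 * L22⁻¹) i l * L22 l k := by
            rw [← Finset.sum_neg_distrib]
            exact Finset.sum_congr rfl fun l _ => by rw [mul_neg, Finset.mul_sum]
        _ = - ∑ k, (L12 * L22⁻¹ * L22) i k := by
            rw [Finset.sum_comm]
            congr 1
        _ = - ∑ k, L12 i k := by rw [hML]
    have h2 : ∑ j, (L11 - L12 * L22⁻¹ * L21) i j
        = ∑ j, L11 i j - ∑ j, (L12 * L22⁻¹ * L21) i j := by
      simp [Matrix.sub_apply, Finset.sum_sub_distrib]
    rw [h2, h1]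
    linarith [hrow1 i]
  intro i
  have hsplit : (L11 - L12 * L22⁻¹ * L21) i i
      + ∑ j ∈ Finset.univ.erase i, (L11 - L12 * L22⁻¹ * L21) i j = 0 := by
    rw [Finset.add_sum_erase _ _ (mem_univ i)]
    exact hrowS i
  have hrest : ∑ j ∈ Finset.univ.erase i, (L11 - L12 * L22⁻¹ * L21) i j ≤ 0 :=
    Finset.sum_nonpos fun j hj => hoffS i j (Ne.symm (Finset.ne_of_mem_erase hj))
  linarith
end
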